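/- arXiv:1811.02251 — 5 statements merged into one kernel-verified Lean document; each statement's English description precedes it below -/
import Mathlib

section
/- Let G^C_{k_d} denote the generating function (in variables q, a, c, d) for coloured partitions in the Capparelli class 𝒞 (colours a,c,d, order 1_a<1_c<1_d<2_a<⋯, difference matrix C with rows a:(2,2,2), c:(1,1,2), d:(0,1,2)) whose largest part is at most k_d. Then for all k ≥ 1: G^C_{k_d} = (1 + c q^k) G^C_{(k-1)_d} + (a q^k + d q^k + a d q^{2k}) G^C_{(k-2)_d} + a d q^{2k-1} (1 - c q^{k-1}) G^C_{(k-3)_d}, with initial conditions G^C_{0_d} = 1, G^C_{-1_d} = 1, G^C_{-2_d} = 0. -/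
noncomputable section

/-- The q-Pochhammer symbol `(x;q)_n = ∏_{i=0}^{n-1} (1 - x q^i)`. -/
def qPoch (x q : ℂ) (n : ℕ) : ℂ := ∏ i ∈ Finset.range n, (1 - x * q ^ i)


/-- The Capparelli difference matrix, colours `0 = a`, `1 = c`, `2 = d`. -/
def capMat : Fin 3 → Fin 3 → ℕ := ![![2,2,2],![1,1,2],![0,1,2]]

/-- A coloured partition (written with largest part first) in the Capparelli class `𝒞`:
parts are positive, and a part of colour `x` followed by a part of colour `y` must exceed
it by at least `capMat x y`.  (These gap conditions encode the order
`1_a < 1_c < 1_d < 2_a < ⋯`.) -/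
def CapValid (l : List (ℕ × Fin 3)) : Prop :=
  (∀ p ∈ l, 1 ≤ p.1) ∧ l.Chain' (fun p r => r.1 + capMat p.2 r.2 ≤ p.1)

/-- The weight of a coloured partition. -/
def wt3 (l : List (ℕ × Fin 3)) : ℕ := (l.map Prod.fst).sum

/-- The number of parts of colour `i`. -/
def nc3 (l : List (ℕ × Fin 3)) (i : Fin 3) : ℕ := (l.map Prod.snd).count i

/-!
Split the partitions with parts at most `n + 1` by their first (largest) part: either it is at
most `n`, or it is `(n+1)_a`, `(n+1)_c` or `(n+1)_d`. Reading the difference matrix, `(n+1)_a`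
can be followed by exactly the partitions with parts at most `n - 1`, `(n+1)_c` by those with
parts at most `n` except those starting with `n_d`, and `(n+1)_d` by what can follow `(n+1)_c`
or by `(n+1)_a` itself. With `s n` the generating function and `t n` that of the partitions
starting with `n_d`, this gives the coupled recurrences
`s (n+1) = s n + a q^(n+1) s (n-1) + c q^(n+1) (s n - t n) + t (n+1)` and
`t (n+1) = d q^(n+1) (s n - t n + a q^(n+1) s (n-1))`; eliminating `t` gives the theorem.
All the sets involved are finite, so the generating functions are finite sums.
-/

theorem three_term_recurrence_of_coupled {R : Type*} [CommRing R] (q a c d : R) (s t : ℕ → R)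
    (hs : ∀ n, s (n + 1) = s n + a * q ^ (n + 1) * s (n - 1)
      + c * q ^ (n + 1) * (s n - t n) + t (n + 1))
    (ht : ∀ n, t (n + 1) = d * q ^ (n + 1) * (s n - t n + a * q ^ (n + 1) * s (n - 1)))
    (n : ℕ) :
    s (n + 2) = (1 + c * q ^ (n + 2)) * s (n + 1)
      + (a * q ^ (n + 2) + d * q ^ (n + 2) + a * d * q ^ (2 * n + 4)) * s n
      + a * d * q ^ (2 * n + 3) * (1 - c * q ^ (n + 1)) * s (n - 1) := by
  have hs1 := hs (n + 1)
  have ht1 := ht (n + 1)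
  simp only [Nat.add_sub_cancel] at hs1 ht1
  linear_combination hs1 + ht1 - c * q ^ (n + 2) * ht n + d * q ^ (n + 2) * hs n

namespace Capparelli

def bounded (k : ℕ) : Set (List (ℕ × Fin 3)) := {l | CapValid l ∧ ∀ p ∈ l, p.1 ≤ k}

def followers (p : ℕ × Fin 3) : Set (List (ℕ × Fin 3)) :=
  {m | CapValid m ∧ ∀ r ∈ m.head?, r.1 + capMat p.2 r.2 ≤ p.1}

def startingWith (p : ℕ × Fin 3) : Set (List (ℕ × Fin 3)) :=
  {l | l ∈ bounded p.1 ∧ l.head? = some p}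

@[simp] lemma capValid_nil : CapValid [] := ⟨by simp, List.isChain_nil⟩

lemma capValid_cons {p : ℕ × Fin 3} {m : List (ℕ × Fin 3)} :
    CapValid (p :: m) ↔ 1 ≤ p.1 ∧ m ∈ followers p := by
  have hchain : CapValid (p :: m) ↔ (∀ x ∈ p :: m, 1 ≤ x.1) ∧
      List.IsChain (fun p r : ℕ × Fin 3 => r.1 + capMat p.2 r.2 ≤ p.1) (p :: m) := Iff.rfl
  rw [hchain, List.isChain_cons, List.forall_mem_cons]
  exact ⟨fun ⟨⟨h1, h2⟩, h3, h4⟩ => ⟨h1, ⟨h2, h4⟩, h3⟩, fun ⟨h1, ⟨h2, h4⟩, h3⟩ => ⟨⟨h1, h2⟩, h3, h4⟩⟩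

lemma le_of_capValid_cons {p r : ℕ × Fin 3} {m : List (ℕ × Fin 3)} (h : CapValid (p :: m))
    (hr : r ∈ m) : r.1 ≤ p.1 := by
  induction m generalizing p with
  | nil => simp at hr
  | cons s m ih =>
    obtain ⟨-, hs, hsp⟩ := capValid_cons.mp h
    have hsp : s.1 ≤ p.1 := (Nat.le_add_right _ _).trans (hsp s rfl)
    rcases List.mem_cons.mp hr with rfl | hr
    · exact hsp
    · exact (ih hs hr).trans hsp

@[simp] lemma nil_mem_bounded (k : ℕ) : [] ∈ bounded k := ⟨capValid_nil, by simp⟩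

@[simp] lemma nil_mem_followers (p : ℕ × Fin 3) : [] ∈ followers p := ⟨capValid_nil, by simp⟩

@[simp] lemma cons_mem_followers {p r : ℕ × Fin 3} {m : List (ℕ × Fin 3)} :
    r :: m ∈ followers p ↔ (1 ≤ r.1 ∧ m ∈ followers r) ∧ r.1 + capMat p.2 r.2 ≤ p.1 := by
  change (CapValid (r :: m) ∧ _) ↔ _
  simp [capValid_cons]

@[simp] lemma cons_mem_bounded {k : ℕ} {p : ℕ × Fin 3} {m : List (ℕ × Fin 3)} :
    p :: m ∈ bounded k ↔ 1 ≤ p.1 ∧ p.1 ≤ k ∧ m ∈ followers p := by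
  refine ⟨fun ⟨hv, hk⟩ => ?_, fun ⟨hp, hpk, hm⟩ => ?_⟩
  · exact ⟨(capValid_cons.mp hv).1, hk p List.mem_cons_self, (capValid_cons.mp hv).2⟩
  · have hv := capValid_cons.mpr ⟨hp, hm⟩
    refine ⟨hv, List.forall_mem_cons.mpr ⟨hpk, fun r hr => ?_⟩⟩
    exact (le_of_capValid_cons hv hr).trans hpk

lemma startingWith_subset (p : ℕ × Fin 3) : startingWith p ⊆ bounded p.1 := fun _ h => h.1

lemma followers_subset_bounded (p : ℕ × Fin 3) : followers p ⊆ bounded p.1 := by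
  rintro (_ | ⟨r, m⟩) h
  · simp
  · simp only [cons_mem_followers, cons_mem_bounded] at h ⊢
    grind

lemma bounded_zero : bounded 0 = {[]} := by
  ext (_ | ⟨p, m⟩)
  · simp
  · simp
    grind

lemma bounded_succ (n : ℕ) :
    bounded (n + 1) = bounded n ∪ ((n + 1, 0) :: ·) '' followers (n + 1, 0)
      ∪ ((n + 1, 1) :: ·) '' followers (n + 1, 1) ∪ ((n + 1, 2) :: ·) '' followers (n + 1, 2) := by
  ext (_ | ⟨⟨v, i⟩, m⟩)
  · simp
  · fin_cases i <;> simp <;> grind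

lemma startingWith_eq_image {p : ℕ × Fin 3} (hp : 1 ≤ p.1) :
    startingWith p = (p :: ·) '' followers p := by
  ext (_ | ⟨r, m⟩)
  · simp [startingWith]
  · simp [startingWith]
    grind

lemma startingWith_zero (j : Fin 3) : startingWith (0, j) = ∅ := by
  ext (_ | ⟨r, m⟩)
  · simp [startingWith]
  · simp [startingWith]
    grind

-- For `n = 0` the truncated `n - 1 = 0` is still right: nothing can follow `1_a`.
lemma followers_succ_a (n : ℕ) : followers (n + 1, 0) = bounded (n - 1) := by
  ext (_ | ⟨⟨v, i⟩, m⟩)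
  · simp
  · fin_cases i <;> simp [capMat] <;> grind

lemma followers_succ_c (n : ℕ) : followers (n + 1, 1) = bounded n \ startingWith (n, 2) := by
  ext (_ | ⟨⟨v, i⟩, m⟩)
  · simp [startingWith]
  · fin_cases i <;> simp [capMat, startingWith] <;> grind

lemma followers_succ_d (n : ℕ) :
    followers (n + 1, 2) = followers (n + 1, 1) ∪ ((n + 1, 0) :: ·) '' followers (n + 1, 0) := by
  ext (_ | ⟨⟨v, i⟩, m⟩)
  · simp
  · fin_cases i <;> simp [capMat]
    grind

lemma bounded_finite : ∀ n, (bounded n).Finite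
  | 0 => by
    rw [bounded_zero]
    exact Set.finite_singleton _
  | n + 1 => by
    have h0 : (followers (n + 1, 0)).Finite := by
      rw [followers_succ_a]
      exact bounded_finite (n - 1)
    have h1 : (followers (n + 1, 1)).Finite := by
      rw [followers_succ_c]
      exact (bounded_finite n).sdiff
    have h2 : (followers (n + 1, 2)).Finite := by
      rw [followers_succ_d]
      exact h1.union (h0.image _)
    rw [bounded_succ]
    exact (((bounded_finite n).union (h0.image _)).union (h1.image _)).union (h2.image _)

lemma followers_finite (p : ℕ × Fin 3) : (followers p).Finite :=
  (bounded_finite p.1).subset (followers_subset_bounded p)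

lemma disjoint_bounded_image_cons {n : ℕ} {p : ℕ × Fin 3} (h : n < p.1)
    (s : Set (List (ℕ × Fin 3))) : Disjoint (bounded n) ((p :: ·) '' s) := by
  rw [Set.disjoint_right]
  rintro _ ⟨m, -, rfl⟩ hm
  exact absurd (hm.2 p List.mem_cons_self) (Nat.not_le.mpr h)

lemma disjoint_image_cons {p p' : ℕ × Fin 3} (h : p ≠ p') (s t : Set (List (ℕ × Fin 3))) :
    Disjoint ((p :: ·) '' s) ((p' :: ·) '' t) := by
  rw [Set.disjoint_left]
  rintro _ ⟨m, -, rfl⟩ ⟨m', -, hm'⟩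
  exact h (List.cons_eq_cons.mp hm').1.symm

section GeneratingFunction

variable (q a c d : ℂ)

def weight (l : List (ℕ × Fin 3)) : ℂ := q ^ wt3 l * a ^ nc3 l 0 * c ^ nc3 l 1 * d ^ nc3 l 2

def gf (s : Set (List (ℕ × Fin 3))) : ℂ := ∑' l : s, weight q a c d l

lemma weight_cons (p : ℕ × Fin 3) (m : List (ℕ × Fin 3)) :
    weight q a c d (p :: m) = ![a, c, d] p.2 * q ^ p.1 * weight q a c d m := by
  obtain ⟨v, i⟩ := p
  fin_cases i <;> simp [weight, wt3, nc3, pow_add, pow_succ] <;> ring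

lemma gf_union {s t : Set (List (ℕ × Fin 3))} (hs : s.Finite) (ht : t.Finite)
    (hst : Disjoint s t) : gf q a c d (s ∪ t) = gf q a c d s + gf q a c d t :=
  Summable.tsum_union_disjoint hst (hs.summable _) (ht.summable _)

lemma gf_sdiff {s t : Set (List (ℕ × Fin 3))} (hs : s.Finite) (hts : t ⊆ s) :
    gf q a c d (s \ t) = gf q a c d s - gf q a c d t := by
  rw [eq_sub_iff_add_eq, ← gf_union q a c d hs.sdiff (hs.subset hts) Set.disjoint_sdiff_left,
    Set.sdiff_union_of_subset hts]

lemma gf_image_cons (p : ℕ × Fin 3) (s : Set (List (ℕ × Fin 3))) :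
    gf q a c d ((p :: ·) '' s) = ![a, c, d] p.2 * q ^ p.1 * gf q a c d s := by
  rw [gf, tsum_image _ List.cons_injective.injOn, gf, ← tsum_mul_left]
  simp only [weight_cons]

lemma gf_bounded_zero : gf q a c d (bounded 0) = 1 := by
  rw [bounded_zero]
  simp [gf, weight, wt3, nc3]

lemma gf_startingWith_zero : gf q a c d (startingWith (0, 2)) = 0 := by
  simp [startingWith_zero, gf]

lemma gf_startingWith {p : ℕ × Fin 3} (hp : 1 ≤ p.1) :
    gf q a c d (startingWith p) = ![a, c, d] p.2 * q ^ p.1 * gf q a c d (followers p) := by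
  rw [startingWith_eq_image hp, gf_image_cons]

lemma gf_followers_succ_c (n : ℕ) : gf q a c d (followers (n + 1, 1)) =
    gf q a c d (bounded n) - gf q a c d (startingWith (n, 2)) := by
  rw [followers_succ_c, gf_sdiff _ _ _ _ (bounded_finite n) (startingWith_subset _)]

lemma gf_followers_succ_d (n : ℕ) : gf q a c d (followers (n + 1, 2)) =
    gf q a c d (followers (n + 1, 1)) + a * q ^ (n + 1) * gf q a c d (followers (n + 1, 0)) := by
  have hdisj : Disjoint (followers (n + 1, 1)) (((n + 1, 0) :: ·) '' followers (n + 1, 0)) := by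
    rw [followers_succ_c]
    exact (disjoint_bounded_image_cons (p := (n + 1, 0)) n.lt_succ_self _).mono_left
      Set.sdiff_subset
  rw [followers_succ_d, gf_union _ _ _ _ (followers_finite _) ((followers_finite _).image _) hdisj,
    gf_image_cons]
  simp

lemma gf_bounded_succ (n : ℕ) :
    gf q a c d (bounded (n + 1)) = gf q a c d (bounded n)
      + a * q ^ (n + 1) * gf q a c d (bounded (n - 1))
      + c * q ^ (n + 1) * (gf q a c d (bounded n) - gf q a c d (startingWith (n, 2)))
      + gf q a c d (startingWith (n + 1, 2)) := by
  have hS := bounded_finite n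
  have hF (j : Fin 3) := (followers_finite (n + 1, j)).image ((n + 1, j) :: ·)
  have hSF (j : Fin 3) :=
    disjoint_bounded_image_cons (p := (n + 1, j)) n.lt_succ_self (followers (n + 1, j))
  have hFF {i j : Fin 3} (h : i ≠ j) : Disjoint (((n + 1, i) :: ·) '' followers (n + 1, i))
      (((n + 1, j) :: ·) '' followers (n + 1, j)) :=
    disjoint_image_cons (by simpa using h) _ _
  rw [bounded_succ, gf_union _ _ _ _ ((hS.union (hF 0)).union (hF 1)) (hF 2)
      (Set.disjoint_union_left.mpr ⟨Set.disjoint_union_left.mpr ⟨hSF 2, hFF (by decide)⟩,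
        hFF (by decide)⟩),
    gf_union _ _ _ _ (hS.union (hF 0)) (hF 1)
      (Set.disjoint_union_left.mpr ⟨hSF 1, hFF (by decide)⟩),
    gf_union _ _ _ _ hS (hF 0) (hSF 0),
    gf_image_cons, gf_image_cons, gf_image_cons,
    gf_startingWith _ _ _ _ (p := (n + 1, 2)) n.succ_pos, followers_succ_a, gf_followers_succ_c]
  simp only [Fin.isValue, Matrix.cons_val_zero, Matrix.cons_val_one, Matrix.cons_val]

lemma gf_startingWith_succ (n : ℕ) : gf q a c d (startingWith (n + 1, 2)) =
    d * q ^ (n + 1) * (gf q a c d (bounded n) - gf q a c d (startingWith (n, 2))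
      + a * q ^ (n + 1) * gf q a c d (bounded (n - 1))) := by
  rw [gf_startingWith _ _ _ _ (p := (n + 1, 2)) n.succ_pos, gf_followers_succ_d,
    gf_followers_succ_c, followers_succ_a]
  simp only [Fin.isValue, Matrix.cons_val]

lemma gf_bounded_one :
    gf q a c d (bounded 1) = 1 + c * q + a * q + d * q + a * d * q ^ 2 := by
  have h := gf_bounded_succ q a c d 0
  rw [gf_startingWith_succ, gf_startingWith_zero, gf_bounded_zero] at h
  rw [h]
  ring

end GeneratingFunction

end Capparelli

open Capparelli

/-- The recurrence for the Capparelli generating function `G^C_{k_d}`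
(generating function for coloured partitions in the Capparelli class with largest part
at most `k`, tracking the weight by `q` and the numbers of parts coloured `a,c,d`):
for all `k ≥ 1`,
`G_k = (1+cq^k) G_{k-1} + (aq^k+dq^k+adq^{2k}) G_{k-2} + adq^{2k-1}(1-cq^{k-1}) G_{k-3}`,
with initial conditions `G_0 = 1`, `G_{-1} = 1`, `G_{-2} = 0`. -/
theorem capparelli_recurrence (q a c d : ℂ) (G : ℤ → ℂ)
    (hG : ∀ k : ℕ, G k =
      ∑' l : {l : List (ℕ × Fin 3) // CapValid l ∧ ∀ p ∈ l, p.1 ≤ k},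
        q ^ wt3 l.1 * a ^ nc3 l.1 0 * c ^ nc3 l.1 1 * d ^ nc3 l.1 2)
    (hGm1 : G (-1) = 1) (hGm2 : G (-2) = 0) :
    G 0 = 1 ∧ ∀ k : ℤ, 1 ≤ k →
      G k = (1 + c * q ^ k) * G (k - 1)
        + (a * q ^ k + d * q ^ k + a * d * q ^ (2 * k)) * G (k - 2)
        + a * d * q ^ (2 * k - 1) * (1 - c * q ^ (k - 1)) * G (k - 3) := by
  have hG' : ∀ n : ℕ, G n = gf q a c d (bounded n) := hG
  have hG_pred : ∀ n : ℕ, G ((n : ℤ) - 1) = gf q a c d (bounded (n - 1)) := by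
    rintro (_ | n)
    · simpa [gf_bounded_zero] using hGm1
    · simpa using hG' n
  refine ⟨(hG' 0).trans (gf_bounded_zero q a c d), fun k hk => ?_⟩
  lift k to ℕ using (by omega)
  match k with
  | 1 =>
    have hG1 : G 1 = gf q a c d (bounded 1) := by exact_mod_cast hG' 1
    have hG0 : G 0 = gf q a c d (bounded 0) := by exact_mod_cast hG' 0
    norm_num [hGm1, hGm2, hG1, hG0, gf_bounded_one, gf_bounded_zero]
    ring
  | n + 2 =>
    have hrec := three_term_recurrence_of_coupled q a c d (fun m => gf q a c d (bounded m))
      (fun m => gf q a c d (startingWith (m, 2))) (gf_bounded_succ q a c d)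
      (gf_startingWith_succ q a c d) n
    rw [show 2 * ((n + 2 : ℕ) : ℤ) - 1 = ((2 * n + 3 : ℕ) : ℤ) by push_cast; ring,
      show 2 * ((n + 2 : ℕ) : ℤ) = ((2 * n + 4 : ℕ) : ℤ) by push_cast; ring,
      show ((n + 2 : ℕ) : ℤ) - 1 = ((n + 1 : ℕ) : ℤ) by push_cast; ring,
      show ((n + 2 : ℕ) : ℤ) - 2 = (n : ℤ) by push_cast; ring,
      show ((n + 2 : ℕ) : ℤ) - 3 = (n : ℤ) - 1 by push_cast; ring]
    simp only [zpow_natCast, hG', hG_pred]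
    exact hrec
end
end

section
/- Let G^P_{k_d}(q;a,b,c,d) be the generating function for coloured partitions in the Primc class 𝒫 (colours a,b,c,d, order 1_a<1_b<1_c<1_d<2_a<⋯, difference matrix P with rows a:(2,1,2,2), b:(1,0,1,1), c:(0,1,0,2), d:(0,1,0,2)) with largest part at most k_d. Then for all k ≥ 2: (1 - c q^k) G^P_{k_d} = ((1 - b c q^{2k})/(1 - b q^k)) G^P_{(k-1)_d} + ((a q^k + d q^k + a d q^{2k})/(1 - b q^{k-1})) G^P_{(k-2)_d} + (a d q^{2k-1}/(1 - b q^{k-2})) G^P_{(k-3)_d}, with G^P_{-1_d} = 1 - b, G^P_{0_d} = 1, and G^P_{1_d} = bq/(1-bq) + (1+aq)(1+dq)/(1-cq). -/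
/-!
For a cap `f : Fin 4 → ℤ`, let `S f` sum the weights of the Primc partitions whose largest part
`m_x` has `m ≤ f x`. If `f x = m`, such a partition either does not start with `m_x`, and is
counted with the cap at `x` lowered to `m - 1`, or it is `m_x` followed by a partition counted
with the cap `m - P(x, ·)`. Peeling `k_d, k_c, k_b, k_a` off `G_{k_d}`, and then the parts
allowed by the caps `R_b(k) = k - P(b, ·)` and `R_c(k) = k - P(c, ·) = k - P(d, ·)`, closes up
on four linear relations. The one for `R_b`, `S R_b(k) = G_{(k-1)_d} + b q^k S R_b(k)`, produces
the denominators `1 - b q^k`; eliminating the others gives the recurrence.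

All these sums converge absolutely: a partition with parts at most `k` is a block of parts equal
to `k`, whose colour word is fixed by its first letter, last letter and length, followed by a
partition with parts at most `k - 1`.
-/

noncomputable section

/-- The Primc difference matrix, colours `0 = a`, `1 = b`, `2 = c`, `3 = d`. -/
def priMat : Fin 4 → Fin 4 → ℕ := ![![2,1,2,2],![1,0,1,1],![0,1,0,2],![0,1,0,2]]

/-- A coloured partition (largest part first) in the Primc class `𝒫`:
parts are positive, and a part of colour `x` followed by a part of colour `y` must exceed
it by at least `priMat x y`.  (These gap conditions encode the order
`1_a < 1_b < 1_c < 1_d < 2_a < ⋯`.) -/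
def PriValid (l : List (ℕ × Fin 4)) : Prop :=
  (∀ p ∈ l, 1 ≤ p.1) ∧ l.Chain' (fun p r => r.1 + priMat p.2 r.2 ≤ p.1)

/-- The weight of a coloured partition. -/
def wt4 (l : List (ℕ × Fin 4)) : ℕ := (l.map Prod.fst).sum

/-- The number of parts of colour `i`. -/
def nc4 (l : List (ℕ × Fin 4)) (i : Fin 4) : ℕ := (l.map Prod.snd).count i


namespace Primc

open Function

/-- Partitions whose largest part `(m, x)` satisfies `m ≤ f x`. -/
def capSet (f : Fin 4 → ℤ) : Set (List (ℕ × Fin 4)) :=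
  {l | PriValid l ∧ ∀ p ∈ l.head?, (p.1 : ℤ) ≤ f p.2}

def bddSet (k : ℕ) : Set (List (ℕ × Fin 4)) := {l | PriValid l ∧ ∀ p ∈ l, p.1 ≤ k}

/-- The cap on the rest of a partition whose largest part `k_x` has been removed. -/
def afterCap (x : Fin 4) (k : ℕ) : Fin 4 → ℤ := fun y => k - priMat x y

/-- Largest part at most `k_x` in the order `1_a < 1_b < 1_c < 1_d < 2_a < ⋯`. -/
def upTo (k : ℕ) (x : Fin 4) : Fin 4 → ℤ := fun y => if y ≤ x then (k : ℤ) else k - 1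

theorem upTo_three (k : ℕ) : upTo k 3 = fun _ => (k : ℤ) := by
  funext y; fin_cases y <;> rfl

theorem afterCap_three : afterCap 3 = afterCap 2 := by
  funext k y; fin_cases y <;> rfl

theorem afterCap_zero_succ (k : ℕ) : afterCap 0 (k + 1) = afterCap 1 k := by
  funext y; fin_cases y <;> simp [afterCap, priMat] <;> ring

theorem priValid_nil : PriValid [] := ⟨by simp, List.isChain_nil⟩

theorem priValid_cons {p : ℕ × Fin 4} {t : List (ℕ × Fin 4)} :
    PriValid (p :: t) ↔
      1 ≤ p.1 ∧ (∀ r ∈ t.head?, r.1 + priMat p.2 r.2 ≤ p.1) ∧ PriValid t := by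
  constructor
  · rintro ⟨hpos, hchain⟩
    obtain ⟨hp, ht⟩ := List.forall_mem_cons.mp hpos
    exact ⟨hp, (List.isChain_cons.mp hchain).1, ht, (List.isChain_cons.mp hchain).2⟩
  · rintro ⟨hp, hhead, ht, htail⟩
    exact ⟨List.forall_mem_cons.mpr ⟨hp, ht⟩, List.isChain_cons.mpr ⟨hhead, htail⟩⟩

theorem PriValid.le_head {p r : ℕ × Fin 4} {t : List (ℕ × Fin 4)} (hl : PriValid (p :: t))
    (hr : r ∈ p :: t) : r.1 ≤ p.1 := by
  have hsorted : ((p :: t).map Prod.fst).Pairwise (· ≥ ·) :=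
    (List.isChain_map_of_isChain _ (fun _ _ h => by omega) hl.2).pairwise
  rw [List.map_cons, List.pairwise_cons] at hsorted
  rcases List.mem_cons.mp hr with rfl | hr
  · exact le_rfl
  · exact hsorted.1 _ (List.mem_map_of_mem hr)

theorem nil_mem_capSet (f : Fin 4 → ℤ) : [] ∈ capSet f := ⟨priValid_nil, by simp⟩

theorem cons_mem_capSet {m : ℕ} {x : Fin 4} {t : List (ℕ × Fin 4)} {f : Fin 4 → ℤ} :
    (m, x) :: t ∈ capSet f ↔ 1 ≤ m ∧ (m : ℤ) ≤ f x ∧ t ∈ capSet (afterCap x m) := by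
  simp only [capSet, afterCap, Set.mem_ofPred_eq, priValid_cons, List.head?_cons,
    Option.mem_def, Option.some.injEq, forall_eq']
  have : (∀ r ∈ t.head?, r.1 + priMat x r.2 ≤ m) ↔ ∀ r ∈ t.head?, (r.1 : ℤ) ≤ m - priMat x r.2 :=
    forall₂_congr fun _ _ => by omega
  tauto

theorem capSet_upTo_three (k : ℕ) : capSet (upTo k 3) = bddSet k := by
  rw [upTo_three]
  ext l
  refine ⟨fun hl => ⟨hl.1, fun r hr => ?_⟩, fun hl => ⟨hl.1, fun p hp => ?_⟩⟩
  · obtain ⟨p, t, rfl⟩ := List.exists_cons_of_ne_nil (List.ne_nil_of_mem hr)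
    have := PriValid.le_head hl.1 hr
    have : (p.1 : ℤ) ≤ k := hl.2 p (by simp)
    omega
  · show (p.1 : ℤ) ≤ k
    exact_mod_cast hl.2 p (List.mem_of_mem_head? hp)

theorem exists_capSet_subset_bddSet (f : Fin 4 → ℤ) : ∃ k, capSet f ⊆ bddSet k := by
  obtain ⟨M, hM⟩ := (Set.finite_range f).bddAbove
  refine ⟨M.toNat, fun l hl => ⟨hl.1, fun r hr => ?_⟩⟩
  obtain ⟨p, t, rfl⟩ := List.exists_cons_of_ne_nil (List.ne_nil_of_mem hr)
  have := PriValid.le_head hl.1 hr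
  have := hl.2 p (by simp)
  have := hM ⟨p.2, rfl⟩
  omega

theorem capSet_eq_union {f : Fin 4 → ℤ} {x : Fin 4} {m : ℕ} (hm : 1 ≤ m) (hfx : f x = m) :
    capSet f =
      capSet (update f x ((m : ℤ) - 1)) ∪ List.cons (m, x) '' capSet (afterCap x m) := by
  ext (_ | ⟨⟨n, y⟩, t⟩)
  · simp [nil_mem_capSet]
  · have himage : (n, y) :: t ∈ List.cons (m, x) '' capSet (afterCap x m) ↔
        (n, y) = (m, x) ∧ t ∈ capSet (afterCap x m) := by
      simp only [Set.mem_image, List.cons.injEq]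
      grind
    rw [Set.mem_union, himage, cons_mem_capSet, cons_mem_capSet]
    by_cases hy : y = x
    · subst hy
      rw [update_self, hfx, Prod.mk.injEq]
      grind
    · simp [hy]

theorem disjoint_capSet_update {f : Fin 4 → ℤ} {x : Fin 4} {m : ℕ} :
    Disjoint (capSet (update f x ((m : ℤ) - 1))) (List.cons (m, x) '' capSet (afterCap x m)) := by
  rw [Set.disjoint_left]
  rintro _ h ⟨t, -, rfl⟩
  have := (cons_mem_capSet.mp h).2.1
  simp at this

/-- The colour words of the runs of equal parts in a Primc partition. -/
def ZeroGapChain (cs : List (Fin 4)) : Prop := cs.IsChain fun x y => priMat x y = 0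

theorem priMat_eq_zero_chain_mid :
    ∀ x y z : Fin 4, priMat x y = 0 → priMat y z = 0 → y = if x = 1 then 1 else 2 := by
  decide

theorem ZeroGapChain.eq_of_head?_getLast?_length :
    ∀ {cs cs' : List (Fin 4)}, ZeroGapChain cs → ZeroGapChain cs' → cs.head? = cs'.head? →
      cs.getLast? = cs'.getLast? → cs.length = cs'.length → cs = cs'
  | x :: y :: z :: t, x' :: y' :: z' :: t', hc, hc', h, h', hl => by
    obtain rfl : x = x' := by simpa using h
    obtain ⟨hxy, hc⟩ := List.isChain_cons_cons.mp hc
    obtain ⟨hxy', hc'⟩ := List.isChain_cons_cons.mp hc'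
    obtain rfl : y = y' := by
      rw [priMat_eq_zero_chain_mid x y z hxy (List.isChain_cons_cons.mp hc).1,
        priMat_eq_zero_chain_mid x y' z' hxy' (List.isChain_cons_cons.mp hc').1]
    rw [eq_of_head?_getLast?_length hc hc' rfl (by simpa using h') (by simpa using hl)]
  | [], [], _, _, _, _, _ => rfl
  | [_], [_], _, _, h, _, _ => by simpa using h
  | [_, _], [_, _], _, _, h, h', _ => by simp_all
  | [], _ :: _, _, _, _, _, hl | _ :: _, [], _, _, _, _, hl
  | [_], _ :: _ :: _, _, _, _, _, hl | _ :: _ :: _, [_], _, _, _, _, hl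
  | [_, _], _ :: _ :: _ :: _, _, _, _, _, hl | _ :: _ :: _ :: _, [_, _], _, _, _, _, hl => by
    simp at hl

theorem summable_pow_length_zeroGapChain {ρ : ℝ} (h0 : 0 ≤ ρ) (h1 : ρ < 1) :
    Summable fun cs : {cs // ZeroGapChain cs} => ρ ^ cs.1.length := by
  have hinj : Injective fun cs : {cs // ZeroGapChain cs} =>
      ((cs.1.head?, cs.1.getLast?), cs.1.length) := fun cs cs' h => by
    simp only [Prod.mk.injEq] at h
    exact Subtype.ext (ZeroGapChain.eq_of_head?_getLast?_length cs.2 cs'.2 h.1.1 h.1.2 h.2)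
  have hsum : Summable fun p : (Option (Fin 4) × Option (Fin 4)) × ℕ => ρ ^ p.2 :=
    (summable_prod_of_nonneg fun _ => pow_nonneg h0 _).mpr
      ⟨fun _ => summable_geometric_of_lt_one h0 h1, Summable.of_finite⟩
  exact hsum.comp_injective hinj

theorem exists_zeroGapChain_append {k : ℕ} : ∀ {l : List (ℕ × Fin 4)}, l ∈ bddSet (k + 1) →
    ∃ cs t, ZeroGapChain cs ∧ t ∈ bddSet k ∧ l = cs.map ((k + 1, ·)) ++ t
  | [], _ => ⟨[], [], List.isChain_nil, ⟨priValid_nil, by simp⟩, rfl⟩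
  | p :: l, ⟨hv, hle⟩ => by
    obtain ⟨-, hhead, hvl⟩ := priValid_cons.mp hv
    by_cases hpk : p.1 = k + 1
    · obtain ⟨cs, t, hcs, ht, rfl⟩ :=
        exists_zeroGapChain_append ⟨hvl, fun r hr => hle r (.tail _ hr)⟩
      refine ⟨p.2 :: cs, t, List.isChain_cons.mpr ⟨fun c hc => ?_, hcs⟩, ht, by simp [← hpk]⟩
      obtain ⟨cs', rfl⟩ : ∃ cs', cs = c :: cs' := List.head?_eq_some_iff.mp hc
      have : k + 1 + priMat p.2 c ≤ p.1 := hhead (k + 1, c) (by simp)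
      omega
    · refine ⟨[], p :: l, List.isChain_nil, ⟨hv, fun r hr => ?_⟩, rfl⟩
      have := PriValid.le_head hv hr
      have := hle p (by simp)
      omega

theorem wt4_map_append (K : ℕ) (cs : List (Fin 4)) (t : List (ℕ × Fin 4)) :
    wt4 (cs.map ((K, ·)) ++ t) = K * cs.length + wt4 t := by
  simp [wt4, Function.comp_def, mul_comm]

theorem summable_pow_wt4_bddSet {r : ℝ} (h0 : 0 ≤ r) (h1 : r < 1) (k : ℕ) :
    Summable fun l : bddSet k => r ^ wt4 l := by
  induction k with
  | zero =>
    have : bddSet 0 ⊆ {[]} := by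
      rintro (_ | ⟨p, t⟩) ⟨hv, hle⟩
      · rfl
      · have := hv.1 p (by simp)
        have := hle p (by simp)
        omega
    exact ((Set.finite_singleton _).subset this).summable fun l => r ^ wt4 l
  | succ k ih =>
    choose cs t hcs ht hl using fun l : bddSet (k + 1) => exists_zeroGapChain_append l.2
    have hinj : Injective fun l =>
        ((⟨cs l, hcs l⟩ : {cs // ZeroGapChain cs}), (⟨t l, ht l⟩ : bddSet k)) := fun l l' h => by
      simp only [Prod.mk.injEq, Subtype.mk.injEq] at h
      exact Subtype.ext (by rw [hl l, hl l', h.1, h.2])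
    have hprod := (summable_pow_length_zeroGapChain (pow_nonneg h0 (k + 1))
      (pow_lt_one₀ h0 h1 (Nat.succ_ne_zero k))).mul_of_nonneg ih
      (fun _ => pow_nonneg (pow_nonneg h0 _) _) (fun _ => pow_nonneg h0 _)
    refine (hprod.comp_injective hinj).congr fun l => ?_
    rw [comp_apply, ← pow_mul, ← pow_add, ← wt4_map_append, ← hl l]

variable {𝕜 : Type*} [NormedField 𝕜]

def wtTerm (w : Fin 4 → 𝕜) (q : 𝕜) (l : List (ℕ × Fin 4)) : 𝕜 :=
  (l.map fun p => w p.2 * q ^ p.1).prod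

def capSum (w : Fin 4 → 𝕜) (q : 𝕜) (f : Fin 4 → ℤ) : 𝕜 := ∑' l : capSet f, wtTerm w q l

theorem wtTerm_vecCons (a b c d q : 𝕜) : ∀ l : List (ℕ × Fin 4),
    wtTerm ![a, b, c, d] q l =
      q ^ wt4 l * a ^ nc4 l 0 * b ^ nc4 l 1 * c ^ nc4 l 2 * d ^ nc4 l 3
  | [] => by simp [wtTerm, wt4, nc4]
  | (m, x) :: l => by
    rw [wtTerm, List.map_cons, List.prod_cons, ← wtTerm, wtTerm_vecCons a b c d q l]
    fin_cases x <;> simp [wt4, nc4, pow_add] <;> ring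

theorem capSum_upTo_three_eq_tsum (a b c d q : 𝕜) (k : ℕ) :
    capSum ![a, b, c, d] q (upTo k 3) =
      ∑' l : {l : List (ℕ × Fin 4) // PriValid l ∧ ∀ p ∈ l, p.1 ≤ k},
        q ^ wt4 l.1 * a ^ nc4 l.1 0 * b ^ nc4 l.1 1 * c ^ nc4 l.1 2 * d ^ nc4 l.1 3 := by
  rw [capSum, capSet_upTo_three]
  exact tsum_congr fun l => wtTerm_vecCons a b c d q l

theorem one_sub_mul_pow_ne_zero {z q : 𝕜} (hz : ‖z‖ ≤ 1) (hq : ‖q‖ < 1) {j : ℕ} (hj : j ≠ 0) :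
    1 - z * q ^ j ≠ 0 := by
  refine sub_ne_zero.mpr fun h => ?_
  have : ‖z * q ^ j‖ < 1 := by
    rw [norm_mul, norm_pow]
    calc ‖z‖ * ‖q‖ ^ j ≤ ‖q‖ ^ j := mul_le_of_le_one_left (by positivity) hz
      _ < 1 := pow_lt_one₀ (norm_nonneg q) hq hj
  rw [← h, norm_one] at this
  exact lt_irrefl _ this

variable {w : Fin 4 → 𝕜} {q : 𝕜}

theorem norm_wtTerm_le (hw : ∀ i, ‖w i‖ ≤ 1) : ∀ l, ‖wtTerm w q l‖ ≤ ‖q‖ ^ wt4 l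
  | [] => by simp [wtTerm, wt4]
  | p :: l => by
    have hl : ‖wtTerm w q l‖ ≤ ‖q‖ ^ wt4 l := norm_wtTerm_le hw l
    calc ‖wtTerm w q (p :: l)‖ = ‖w p.2‖ * ‖q‖ ^ p.1 * ‖wtTerm w q l‖ := by
          simp [wtTerm, norm_pow]
      _ ≤ 1 * ‖q‖ ^ p.1 * ‖q‖ ^ wt4 l := by gcongr; exact hw _
      _ = ‖q‖ ^ wt4 (p :: l) := by simp [wt4, pow_add]

theorem capSum_eq_one {f : Fin 4 → ℤ} (hf : ∀ y, f y ≤ 0) : capSum w q f = 1 := by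
  have hsingle : capSet f = {[]} := by
    refine Set.eq_singleton_iff_unique_mem.mpr ⟨nil_mem_capSet f, ?_⟩
    rintro (_ | ⟨⟨m, x⟩, t⟩) h
    · rfl
    · have := cons_mem_capSet.mp h
      have := hf x
      omega
  rw [capSum, hsingle, tsum_singleton]
  simp [wtTerm]

theorem capSum_upTo_zero (x : Fin 4) : capSum w q (upTo 0 x) = 1 :=
  capSum_eq_one fun y => by unfold upTo; split_ifs <;> simp

theorem capSum_afterCap_zero (x : Fin 4) : capSum w q (afterCap x 0) = 1 :=
  capSum_eq_one fun y => by simp [afterCap]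

variable [CompleteSpace 𝕜]

theorem summable_wtTerm_of_subset_bddSet (hq : ‖q‖ < 1) (hw : ∀ i, ‖w i‖ ≤ 1)
    {s : Set (List (ℕ × Fin 4))} {k : ℕ} (hs : s ⊆ bddSet k) :
    Summable fun l : s => wtTerm w q l :=
  .of_norm_bounded ((summable_pow_wt4_bddSet (norm_nonneg q) hq k).comp_injective
    (Set.inclusion_injective hs)) fun l => norm_wtTerm_le hw l

theorem capSum_peel (hq : ‖q‖ < 1) (hw : ∀ i, ‖w i‖ ≤ 1) (f : Fin 4 → ℤ) (x : Fin 4) {m : ℕ}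
    (hm : 1 ≤ m) (hfx : f x = m) :
    capSum w q f =
      capSum w q (update f x ((m : ℤ) - 1)) + w x * q ^ m * capSum w q (afterCap x m) := by
  obtain ⟨k, hk⟩ := exists_capSet_subset_bddSet f
  have hunion := capSet_eq_union hm hfx
  rw [hunion, Set.union_subset_iff] at hk
  rw [capSum, hunion, Summable.tsum_union_disjoint (f := wtTerm w q) disjoint_capSet_update
    (summable_wtTerm_of_subset_bddSet hq hw hk.1) (summable_wtTerm_of_subset_bddSet hq hw hk.2),
    tsum_image _ List.cons_injective.injOn]
  simp only [wtTerm, List.map_cons, List.prod_cons, tsum_mul_left]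
  rfl

theorem capSum_upTo_succ_three_eq_upTo_two (hq : ‖q‖ < 1) (hw : ∀ i, ‖w i‖ ≤ 1) (k : ℕ) :
    capSum w q (upTo (k + 1) 3) =
      capSum w q (upTo (k + 1) 2) + w 3 * q ^ (k + 1) * capSum w q (afterCap 2 (k + 1)) := by
  rw [capSum_peel hq hw (upTo (k + 1) 3) 3 (by omega) rfl, afterCap_three]
  congr 2
  funext y; fin_cases y <;> rfl

theorem capSum_upTo_three_eq_mul_afterCap_one (hq : ‖q‖ < 1) (hw : ∀ i, ‖w i‖ ≤ 1) (k : ℕ) :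
    capSum w q (upTo k 3) = (1 - w 1 * q ^ (k + 1)) * capSum w q (afterCap 1 (k + 1)) := by
  have h := capSum_peel hq hw (afterCap 1 (k + 1)) 1 (m := k + 1) (by omega)
    (by simp [afterCap, priMat])
  rw [show update (afterCap 1 (k + 1)) 1 ((k + 1 : ℕ) - 1) = upTo k 3 by
    funext y; fin_cases y <;> simp [afterCap, upTo, priMat]] at h
  linear_combination -h

theorem capSum_upTo_succ_three_eq_afterCap (hq : ‖q‖ < 1) (hw : ∀ i, ‖w i‖ ≤ 1) (k : ℕ) :
    capSum w q (upTo (k + 1) 3) = capSum w q (afterCap 1 (k + 1)) +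
      w 0 * q ^ (k + 1) * capSum w q (afterCap 1 k) +
      (w 2 + w 3) * q ^ (k + 1) * capSum w q (afterCap 2 (k + 1)) := by
  have hc := capSum_peel hq hw (upTo (k + 1) 2) 2 (by omega) rfl
  have hb := capSum_peel hq hw (upTo (k + 1) 1) 1 (by omega) rfl
  have ha := capSum_peel hq hw (upTo (k + 1) 0) 0 (by omega) rfl
  rw [show update (upTo (k + 1) 2) 2 ((k + 1 : ℕ) - 1) = upTo (k + 1) 1 by
    funext y; fin_cases y <;> rfl] at hc
  rw [show update (upTo (k + 1) 1) 1 ((k + 1 : ℕ) - 1) = upTo (k + 1) 0 by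
    funext y; fin_cases y <;> rfl] at hb
  rw [show update (upTo (k + 1) 0) 0 ((k + 1 : ℕ) - 1) = upTo k 3 by
    funext y; fin_cases y <;> simp [upTo], afterCap_zero_succ] at ha
  linear_combination capSum_upTo_succ_three_eq_upTo_two hq hw k + hc + hb + ha +
    capSum_upTo_three_eq_mul_afterCap_one hq hw k

theorem capSum_afterCap_two_eq (hq : ‖q‖ < 1) (hw : ∀ i, ‖w i‖ ≤ 1) (k : ℕ) :
    (1 - w 2 * q ^ (k + 1)) * capSum w q (afterCap 2 (k + 1)) =
      capSum w q (upTo k 2) + w 0 * q ^ (k + 1) * capSum w q (afterCap 1 k) := by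
  have hc := capSum_peel hq hw (afterCap 2 (k + 1)) 2 (m := k + 1) (by omega)
    (by simp [afterCap, priMat])
  have ha := capSum_peel hq hw (update (afterCap 2 (k + 1)) 2 ((k + 1 : ℕ) - 1)) 0
    (m := k + 1) (by omega) (by simp [afterCap, priMat])
  rw [show update (update (afterCap 2 (k + 1)) 2 ((k + 1 : ℕ) - 1)) 0 ((k + 1 : ℕ) - 1) =
      upTo k 2 by funext y; fin_cases y <;> simp [afterCap, upTo, priMat]; ring,
    afterCap_zero_succ] at ha
  linear_combination hc + ha

theorem capSum_recurrence (hq : ‖q‖ < 1) (hw : ∀ i, ‖w i‖ ≤ 1) (n : ℕ) :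
    (1 - w 2 * q ^ (n + 2)) * capSum w q (upTo (n + 2) 3) =
      (1 - w 1 * w 2 * q ^ (2 * n + 4)) * capSum w q (afterCap 1 (n + 2)) +
      (w 0 * q ^ (n + 2) + w 3 * q ^ (n + 2) + w 0 * w 3 * q ^ (2 * n + 4)) *
        capSum w q (afterCap 1 (n + 1)) +
      w 0 * w 3 * q ^ (2 * n + 3) * capSum w q (afterCap 1 n) := by
  -- Once `(1 - c q^(n+2)) R_c(n+2)` is expanded, the leftover `G_{(n+1)_c}` and `G_{(n+1)_d}`
  -- are removed with the relations at level `n + 1`.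
  linear_combination (1 - w 2 * q ^ (n + 2)) * capSum_upTo_succ_three_eq_afterCap hq hw (n + 1) +
    (w 2 + w 3) * q ^ (n + 2) * capSum_afterCap_two_eq hq hw (n + 1) -
    (w 2 + w 3) * q ^ (n + 2) * capSum_upTo_succ_three_eq_upTo_two hq hw n +
    w 2 * q ^ (n + 2) * capSum_upTo_three_eq_mul_afterCap_one hq hw (n + 1) +
    w 3 * q ^ (n + 2) * capSum_upTo_succ_three_eq_afterCap hq hw n

theorem capSum_upTo_one (hq : ‖q‖ < 1) (hw : ∀ i, ‖w i‖ ≤ 1) :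
    capSum w q (upTo 1 3) =
      w 1 * q / (1 - w 1 * q) + (1 + w 0 * q) * (1 + w 3 * q) / (1 - w 2 * q) := by
  have h1 : 1 - w 1 * q ≠ 0 := by simpa using one_sub_mul_pow_ne_zero (hw 1) hq one_ne_zero
  have h2 : 1 - w 2 * q ≠ 0 := by simpa using one_sub_mul_pow_ne_zero (hw 2) hq one_ne_zero
  have hA := capSum_upTo_three_eq_mul_afterCap_one hq hw 0
  have hB := capSum_upTo_succ_three_eq_afterCap hq hw 0
  have hC := capSum_afterCap_two_eq hq hw 0
  simp only [capSum_upTo_zero, capSum_afterCap_zero, zero_add, pow_one] at hA hB hC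
  rw [div_add_div _ _ h1 h2, eq_div_iff (mul_ne_zero h1 h2)]
  linear_combination (1 - w 1 * q) * (1 - w 2 * q) * hB - (1 - w 2 * q) * hA +
    (w 2 + w 3) * q * (1 - w 1 * q) * hC

end Primc

open Primc in
/-- The recurrence for the Primc generating function `G^P_{k_d}` (generating function for
coloured partitions in the Primc class with largest part at most `k`, tracking weight
by `q` and the numbers of parts of colours `a,b,c,d`), with the convention
`G^P_{-1_d} = 1 - b`: one has `G^P_{0_d} = 1`,
`G^P_{1_d} = bq/(1-bq) + (1+aq)(1+dq)/(1-cq)`, and for all `k ≥ 2`,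
`(1-cq^k) G_k = ((1-bcq^{2k})/(1-bq^k)) G_{k-1}
  + ((aq^k+dq^k+adq^{2k})/(1-bq^{k-1})) G_{k-2} + (adq^{2k-1}/(1-bq^{k-2})) G_{k-3}`. -/
theorem primc_recurrence (q a b c d : ℂ) (hq : ‖q‖ < 1) (ha : ‖a‖ ≤ 1) (hb : ‖b‖ ≤ 1)
    (hc : ‖c‖ ≤ 1) (hd : ‖d‖ ≤ 1) (hb1 : b ≠ 1) (G : ℤ → ℂ)
    (hG : ∀ k : ℕ, G k =
      ∑' l : {l : List (ℕ × Fin 4) // PriValid l ∧ ∀ p ∈ l, p.1 ≤ k},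
        q ^ wt4 l.1 * a ^ nc4 l.1 0 * b ^ nc4 l.1 1 * c ^ nc4 l.1 2 * d ^ nc4 l.1 3)
    (hGm1 : G (-1) = 1 - b) :
    G 0 = 1 ∧
    G 1 = b * q / (1 - b * q) + (1 + a * q) * (1 + d * q) / (1 - c * q) ∧
    ∀ k : ℤ, 2 ≤ k →
      (1 - c * q ^ k) * G k =
        (1 - b * c * q ^ (2 * k)) / (1 - b * q ^ k) * G (k - 1) +
        (a * q ^ k + d * q ^ k + a * d * q ^ (2 * k)) / (1 - b * q ^ (k - 1)) * G (k - 2) +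
        a * d * q ^ (2 * k - 1) / (1 - b * q ^ (k - 2)) * G (k - 3) := by
  have hw : ∀ i, ‖![a, b, c, d] i‖ ≤ 1 := by intro i; fin_cases i <;> assumption
  have hGS : ∀ (e : ℤ) (j : ℕ), e = j → G e = capSum ![a, b, c, d] q (upTo j 3) := by
    rintro _ j rfl
    rw [hG, capSum_upTo_three_eq_tsum]
  have hden : ∀ j : ℕ, 1 - b * q ^ j ≠ 0
    | 0 => by simpa [sub_eq_zero] using hb1.symm
    | j + 1 => one_sub_mul_pow_ne_zero hb hq j.succ_ne_zero
  have hGR : ∀ j : ℕ, G (j - 1) = (1 - b * q ^ j) * capSum ![a, b, c, d] q (afterCap 1 j)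
    | 0 => by simp [hGm1, capSum_afterCap_zero]
    | j + 1 => by
      rw [hGS _ j (by push_cast; ring), capSum_upTo_three_eq_mul_afterCap_one hq hw]
      rfl
  have hcancel : ∀ (X : ℂ) (j : ℕ) (e i : ℤ), e = j → i = j - 1 →
      X / (1 - b * q ^ e) * G i = X * capSum ![a, b, c, d] q (afterCap 1 j) := by
    rintro X j _ _ rfl rfl
    rw [zpow_natCast, hGR, ← mul_assoc, div_mul_cancel₀ _ (hden j)]
  have hpow : ∀ (e : ℤ) (j : ℕ), e = j → q ^ e = q ^ j := by
    rintro _ j rfl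
    exact zpow_natCast q j
  refine ⟨(hGS 0 0 rfl).trans (capSum_upTo_zero 3), (hGS 1 1 rfl).trans (capSum_upTo_one hq hw),
    fun k hk => ?_⟩
  obtain ⟨n, hn⟩ : ∃ n : ℕ, k = n + 2 := ⟨(k - 2).toNat, by omega⟩
  rw [hcancel _ (n + 2) k (k - 1) (by omega) (by omega),
    hcancel _ (n + 1) (k - 1) (k - 2) (by omega) (by omega),
    hcancel _ n (k - 2) (k - 3) (by omega) (by omega), hGS k (n + 2) (by omega),
    hpow k (n + 2) (by omega), hpow (2 * k) (2 * n + 4) (by omega),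
    hpow (2 * k - 1) (2 * n + 3) (by omega)]
  exact capSum_recurrence hq hw n
end
end

section
/- Let G^C_{k_d}(q;a,c,d) satisfy G^C_{k_d} = (1+cq^k)G^C_{(k-1)_d} + (aq^k+dq^k+adq^{2k})G^C_{(k-2)_d} + adq^{2k-1}(1-cq^{k-1})G^C_{(k-3)_d} for k ≥ 1 with G^C_{0_d}=G^C_{-1_d}=1, G^C_{-2_d}=0, and let H_k(q;a,b,c,d) satisfy (1-cq^k)(1-bq^{k+1})H_k = (1-bcq^{2k})H_{k-1} + (aq^k+dq^k+adq^{2k})H_{k-2} + adq^{2k-1}H_{k-3} for k ≥ 0 with H_{-1}=1, H_{-2}=0, H_{-3}=(b-1)cq/(ad). Then for all k ≥ 0, G^C_{k_d}(q;a,c,d)/(cq;q)_{k+1} = H_k(q;a,c,c,d). -/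
/-!
Put `P k = (cq;q)_{k+1}` for `k ≥ 0` and `P k = 1` for `k < 0`. Multiplying the recurrence of
`H` at `k` by `P (k-2)` and using `1 - c²q^{2k} = (1 - cq^k)(1 + cq^k)` shows that `P k * H k`
satisfies the recurrence of `G`. The value of `H (-3)` is chosen so that `P 0 * H 0 = 1`, so the
two sequences also share their initial values at `-2, -1, 0`, hence agree.
-/

noncomputable section

def SolvesRec3 {R : Type*} [Add R] [Mul R] (α β γ u : ℤ → R) : Prop :=
  ∀ k : ℤ, 1 ≤ k → u k = α k * u (k - 1) + β k * u (k - 2) + γ k * u (k - 3)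

theorem SolvesRec3.eq_of_initial {R : Type*} [Add R] [Mul R] {α β γ u v : ℤ → R}
    (hu : SolvesRec3 α β γ u) (hv : SolvesRec3 α β γ v)
    (h₀ : u 0 = v 0) (h₁ : u (-1) = v (-1)) (h₂ : u (-2) = v (-2)) (n : ℕ) :
    u n = v n := by
  suffices ∀ n : ℕ, u n = v n ∧ u (n - 1) = v (n - 1) ∧ u (n - 2) = v (n - 2) from (this n).1
  intro n
  induction n with
  | zero => exact ⟨h₀, h₁, h₂⟩
  | succ n ih =>
    obtain ⟨e₀, e₁, e₂⟩ := ih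
    have i₁ : ((n + 1 : ℕ) : ℤ) - 1 = n := by push_cast; ring
    have i₂ : ((n + 1 : ℕ) : ℤ) - 2 = n - 1 := by push_cast; ring
    have i₃ : ((n + 1 : ℕ) : ℤ) - 3 = n - 2 := by push_cast; ring
    refine ⟨?_, i₁ ▸ e₀, i₂ ▸ e₁⟩
    rw [hu _ (by omega), hv _ (by omega), i₁, i₂, i₃, e₀, e₁, e₂]

theorem qPoch_mul_toNat_add_one (c q : ℂ) {k : ℤ} (hk : 0 ≤ k) :
    qPoch (c * q) q (k + 1).toNat = qPoch (c * q) q k.toNat * (1 - c * q ^ (k + 1)) := by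
  lift k to ℕ using hk
  rw [show ((k : ℤ) + 1).toNat = k + 1 by omega, Int.toNat_natCast, qPoch,
    Finset.prod_range_succ, ← Nat.cast_succ, zpow_natCast, pow_succ' q k, mul_assoc]
  rfl

theorem qPoch_mul_ne_zero {c q : ℂ} (hcq : ∀ i : ℕ, 1 - c * q ^ i ≠ 0) (n : ℕ) :
    qPoch (c * q) q n ≠ 0 :=
  Finset.prod_ne_zero_iff.mpr fun i _ => by simpa [mul_assoc, ← pow_succ'] using hcq (i + 1)

section Capparelli

variable {q a c d : ℂ} {H : ℤ → ℂ}

theorem solvesRec3_qPoch_mul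
    (hHrec : ∀ k : ℤ, 0 ≤ k →
      (1 - c * q ^ k) * (1 - c * q ^ (k + 1)) * H k =
        (1 - c * c * q ^ (2 * k)) * H (k - 1) +
        (a * q ^ k + d * q ^ k + a * d * q ^ (2 * k)) * H (k - 2) +
        a * d * q ^ (2 * k - 1) * H (k - 3))
    (hHm2 : H (-2) = 0) :
    SolvesRec3 (fun k => 1 + c * q ^ k) (fun k => a * q ^ k + d * q ^ k + a * d * q ^ (2 * k))
      (fun k => a * d * q ^ (2 * k - 1) * (1 - c * q ^ (k - 1)))
      (fun k => qPoch (c * q) q (k + 1).toNat * H k) := by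
  intro k hk
  have hP₀ := qPoch_mul_toNat_add_one c q (k := k) (by omega)
  have hP₁ := qPoch_mul_toNat_add_one c q (k := k - 1) (by omega)
  rw [sub_add_cancel] at hP₁
  have hsq : q ^ (2 * k) = q ^ k * q ^ k := by rw [mul_comm, zpow_mul, zpow_two]
  have hlast : qPoch (c * q) q (k - 1).toNat * H (k - 3) =
      (1 - c * q ^ (k - 1)) * (qPoch (c * q) q (k - 2).toNat * H (k - 3)) := by
    rcases eq_or_lt_of_le hk with rfl | hk
    · norm_num [hHm2]
    · have hP₂ := qPoch_mul_toNat_add_one c q (k := k - 2) (by omega)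
      rw [show k - 2 + 1 = k - 1 by ring] at hP₂
      rw [hP₂]
      ring
  simp only [show k - 1 + 1 = k by ring, show k - 2 + 1 = k - 1 by ring,
    show k - 3 + 1 = k - 2 by ring]
  rw [hP₀, hP₁]
  linear_combination qPoch (c * q) q (k - 1).toNat * hHrec k (by omega)
    - qPoch (c * q) q (k - 1).toNat * c * c * H (k - 1) * hsq
    + a * d * q ^ (2 * k - 1) * hlast

theorem one_sub_mul_mul_H_zero_eq_one (hq : q ≠ 0) (ha : a ≠ 0) (hd : d ≠ 0) (hc : 1 - c ≠ 0)
    (hH0 : (1 - c) * (1 - c * q) * H 0 =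
      (1 - c * c) * H (-1) + (a + d + a * d) * H (-2) + a * d * q⁻¹ * H (-3))
    (hHm1 : H (-1) = 1) (hHm2 : H (-2) = 0) (hHm3 : H (-3) = (c - 1) * c * q / (a * d)) :
    (1 - c * q) * H 0 = 1 := by
  rw [hHm1, hHm2, hHm3] at hH0
  have hrhs : a * d * q⁻¹ * ((c - 1) * c * q / (a * d)) = (c - 1) * c := by field_simp
  refine mul_left_cancel₀ hc ?_
  linear_combination hH0 + hrhs

end Capparelli

/-- Lemma 2.2 of the paper: if `G^C_{k_d}` satisfies the Capparelli recurrence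
`G_k = (1+cq^k)G_{k-1} + (aq^k+dq^k+adq^{2k})G_{k-2} + adq^{2k-1}(1-cq^{k-1})G_{k-3}`
for `k ≥ 1` with `G_0 = G_{-1} = 1`, `G_{-2} = 0`, and `H_k = H_k(q;a,c,c,d)` satisfies
`(1-cq^k)(1-cq^{k+1})H_k = (1-c²q^{2k})H_{k-1} + (aq^k+dq^k+adq^{2k})H_{k-2}
  + adq^{2k-1}H_{k-3}` for `k ≥ 0` with `H_{-1} = 1`, `H_{-2} = 0`,
`H_{-3} = (c-1)cq/(ad)`, then for all `k ≥ 0`,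
`G^C_{k_d} / (cq;q)_{k+1} = H_k`. -/
theorem capparelli_H_lemma (q a c d : ℂ) (hq : q ≠ 0) (ha : a ≠ 0) (hd : d ≠ 0)
    (hcq : ∀ i : ℕ, 1 - c * q ^ i ≠ 0)
    (G : ℤ → ℂ)
    (hGrec : ∀ k : ℤ, 1 ≤ k →
      G k = (1 + c * q ^ k) * G (k - 1)
        + (a * q ^ k + d * q ^ k + a * d * q ^ (2 * k)) * G (k - 2)
        + a * d * q ^ (2 * k - 1) * (1 - c * q ^ (k - 1)) * G (k - 3))
    (hG0 : G 0 = 1) (hGm1 : G (-1) = 1) (hGm2 : G (-2) = 0)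
    (H : ℤ → ℂ)
    (hHrec : ∀ k : ℤ, 0 ≤ k →
      (1 - c * q ^ k) * (1 - c * q ^ (k + 1)) * H k =
        (1 - c * c * q ^ (2 * k)) * H (k - 1) +
        (a * q ^ k + d * q ^ k + a * d * q ^ (2 * k)) * H (k - 2) +
        a * d * q ^ (2 * k - 1) * H (k - 3))
    (hHm1 : H (-1) = 1) (hHm2 : H (-2) = 0) (hHm3 : H (-3) = (c - 1) * c * q / (a * d)) :
    ∀ k : ℕ, G k / qPoch (c * q) q (k + 1) = H k := by
  have hF0 : (1 - c * q) * H 0 = 1 :=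
    one_sub_mul_mul_H_zero_eq_one hq ha hd (by simpa using hcq 0) (by simpa using hHrec 0 le_rfl)
      hHm1 hHm2 hHm3
  have hGF := SolvesRec3.eq_of_initial hGrec (solvesRec3_qPoch_mul hHrec hHm2)
    (by simpa [qPoch, hG0] using hF0.symm) (by simp [qPoch, hGm1, hHm1])
    (by simp [qPoch, hGm2, hHm2])
  intro k
  rw [hGF k, show ((k : ℤ) + 1).toNat = k + 1 by omega]
  exact mul_div_cancel_left₀ _ (qPoch_mul_ne_zero hcq _)
end
end

section
/- With G^P_{k_d}(q;a,b,c,d) defined by the recurrence (1-cq^k)G^P_{k_d} = ((1-bcq^{2k})/(1-bq^k))G^P_{(k-1)_d} + ((aq^k+dq^k+adq^{2k})/(1-bq^{k-1}))G^P_{(k-2)_d} + (adq^{2k-1}/(1-bq^{k-2}))G^P_{(k-3)_d} for k ≥ 2, initial values G^P_{-1_d}=1-b, G^P_{0_d}=1, G^P_{1_d}= bq/(1-bq) + (1+aq)(1+dq)/(1-cq), and with H_k(q;a,b,c,d) as defined by its recurrence and initial conditions H_{-1}=1, H_{-2}=0, H_{-3}=(b-1)cq/(ad), we have for all k ≥ 0: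 G^P_{k_d}(q;a,b,c,d)/(1 - b q^{k+1}) = H_k(q;a,b,c,d). -/
/-!
The leading coefficient `1 - c q^k` of the recurrence for `G` never vanishes, so a solution is
determined by its values at `k = -1, 0, 1`. The rescaled sequence `(1 - b q^{k+1}) H_k` solves the
same recurrence, since the rescaling cancels exactly the denominators `1 - b q^j` of the
`G`-recurrence, and the `H`-recurrence at `k = 0, 1` shows that it starts with the initial values
of `G`. At `k = 0` the term `a d q^{-1} H_{-3}` collapses to `(b - 1) c`.
-/

section ThirdOrderRecurrence

variable {M : Type*} [MonoidWithZero M] [IsLeftCancelMulZero M]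

theorem eq_of_third_order_recurrence {u v α : ℤ → M} {R : ℤ → M → M → M → M} {k₀ : ℤ}
    (hα : ∀ k, k₀ ≤ k → α k ≠ 0)
    (hu : ∀ k, k₀ ≤ k → α k * u k = R k (u (k - 1)) (u (k - 2)) (u (k - 3)))
    (hv : ∀ k, k₀ ≤ k → α k * v k = R k (v (k - 1)) (v (k - 2)) (v (k - 3)))
    (h₁ : u (k₀ - 1) = v (k₀ - 1)) (h₂ : u (k₀ - 2) = v (k₀ - 2))
    (h₃ : u (k₀ - 3) = v (k₀ - 3)) :
    ∀ k, k₀ - 3 ≤ k → u k = v k := by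
  have window : ∀ k, k₀ ≤ k →
      u (k - 3) = v (k - 3) ∧ u (k - 2) = v (k - 2) ∧ u (k - 1) = v (k - 1) := by
    intro k hk
    induction k, hk using Int.leInduction with
    | base => exact ⟨h₃, h₂, h₁⟩
    | succ k hk ih =>
      obtain ⟨e₃, e₂, e₁⟩ := ih
      have e₀ : u k = v k := mul_left_cancel₀ (hα k hk) (by rw [hu k hk, hv k hk, e₁, e₂, e₃])
      rw [show k + 1 - 3 = k - 2 by ring, show k + 1 - 2 = k - 1 by ring, add_sub_cancel_right]
      exact ⟨e₂, e₁, e₀⟩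
  intro k hk
  simpa using (window (k + 3) (by omega)).1

end ThirdOrderRecurrence

theorem one_sub_mul_zpow_ne_zero {K : Type*} [DivisionRing K] {b q : K}
    (h : ∀ i : ℕ, 1 - b * q ^ i ≠ 0) {k : ℤ} (hk : 0 ≤ k) : 1 - b * q ^ k ≠ 0 := by
  lift k to ℕ using hk
  simpa using h k

section Primc

variable {K : Type*} [Field K] (q a b c d : K)

def primcGStep (k : ℤ) (x y z : K) : K :=
  (1 - b * c * q ^ (2 * k)) / (1 - b * q ^ k) * x +
    (a * q ^ k + d * q ^ k + a * d * q ^ (2 * k)) / (1 - b * q ^ (k - 1)) * y +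
    a * d * q ^ (2 * k - 1) / (1 - b * q ^ (k - 2)) * z

def PrimcHRecurrenceAt (H : ℤ → K) (k : ℤ) : Prop :=
  (1 - c * q ^ k) * (1 - b * q ^ (k + 1)) * H k =
    (1 - b * c * q ^ (2 * k)) * H (k - 1) +
    (a * q ^ k + d * q ^ k + a * d * q ^ (2 * k)) * H (k - 2) +
    a * d * q ^ (2 * k - 1) * H (k - 3)

def primcRescale (H : ℤ → K) (k : ℤ) : K := (1 - b * q ^ (k + 1)) * H k

variable {q a b c d}

namespace PrimcHRecurrenceAt

variable {H : ℤ → K}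

theorem mul_primcRescale {k : ℤ} (hH : PrimcHRecurrenceAt q a b c d H k)
    (h₀ : 1 - b * q ^ k ≠ 0) (h₁ : 1 - b * q ^ (k - 1) ≠ 0) (h₂ : 1 - b * q ^ (k - 2) ≠ 0) :
    (1 - c * q ^ k) * primcRescale q b H k =
      primcGStep q a b c d k (primcRescale q b H (k - 1)) (primcRescale q b H (k - 2))
        (primcRescale q b H (k - 3)) := by
  have hk₁ : k - 1 + 1 = k := by ring
  have hk₂ : k - 2 + 1 = k - 1 := by ring
  have hk₃ : k - 3 + 1 = k - 2 := by ring
  rw [primcGStep, primcRescale, primcRescale, primcRescale, primcRescale, hk₁, hk₂, hk₃,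
    ← mul_assoc, hH]
  field_simp

theorem primcRescale_zero (hH : PrimcHRecurrenceAt q a b c d H 0) (hq : q ≠ 0) (ha : a ≠ 0)
    (hd : d ≠ 0) (hc : 1 - c ≠ 0) (hH₁ : H (-1) = 1) (hH₂ : H (-2) = 0)
    (hH₃ : H (-3) = (b - 1) * c * q / (a * d)) :
    primcRescale q b H 0 = 1 := by
  unfold PrimcHRecurrenceAt at hH
  norm_num [hH₁, hH₂, hH₃, zpow_neg] at hH
  field_simp at hH
  rw [primcRescale, zero_add, zpow_one]
  exact mul_left_cancel₀ hc (by linear_combination hH)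

theorem primcRescale_one (hH : PrimcHRecurrenceAt q a b c d H 1) (hb : 1 - b * q ≠ 0)
    (hc : 1 - c * q ≠ 0) (hH₀ : primcRescale q b H 0 = 1) (hH₁ : H (-1) = 1)
    (hH₂ : H (-2) = 0) :
    primcRescale q b H 1 = b * q / (1 - b * q) + (1 + a * q) * (1 + d * q) / (1 - c * q) := by
  unfold PrimcHRecurrenceAt at hH
  norm_num [hH₁, hH₂] at hH
  rw [primcRescale, zero_add, zpow_one] at hH₀
  rw [primcRescale, show (1 : ℤ) + 1 = (2 : ℕ) by norm_num, zpow_natCast,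
    div_add_div _ _ hb hc, eq_div_iff (mul_ne_zero hb hc)]
  linear_combination (1 - b * q) * hH + (1 - b * c * q ^ 2) * hH₀

end PrimcHRecurrenceAt

end Primc

/-- Lemma 2.4 of the paper: if `G^P_{k_d}` satisfies the Primc recurrence
`(1-cq^k)G_k = ((1-bcq^{2k})/(1-bq^k))G_{k-1} + ((aq^k+dq^k+adq^{2k})/(1-bq^{k-1}))G_{k-2}
  + (adq^{2k-1}/(1-bq^{k-2}))G_{k-3}` for `k ≥ 2`, with `G_{-1} = 1-b`, `G_0 = 1`,
`G_1 = bq/(1-bq) + (1+aq)(1+dq)/(1-cq)`, and `H_k` satisfies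
`(1-cq^k)(1-bq^{k+1})H_k = (1-bcq^{2k})H_{k-1} + (aq^k+dq^k+adq^{2k})H_{k-2}
  + adq^{2k-1}H_{k-3}` for `k ≥ 0` with `H_{-1} = 1`, `H_{-2} = 0`, `H_{-3} = (b-1)cq/(ad)`,
then for all `k ≥ 0`, `G^P_{k_d} / (1 - bq^{k+1}) = H_k`. -/
theorem primc_H_lemma (q a b c d : ℂ) (hq : q ≠ 0) (ha : a ≠ 0) (hd : d ≠ 0)
    (hb : ∀ i : ℕ, 1 - b * q ^ i ≠ 0) (hc : ∀ i : ℕ, 1 - c * q ^ i ≠ 0)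
    (G : ℤ → ℂ)
    (hGrec : ∀ k : ℤ, 2 ≤ k →
      (1 - c * q ^ k) * G k =
        (1 - b * c * q ^ (2 * k)) / (1 - b * q ^ k) * G (k - 1) +
        (a * q ^ k + d * q ^ k + a * d * q ^ (2 * k)) / (1 - b * q ^ (k - 1)) * G (k - 2) +
        a * d * q ^ (2 * k - 1) / (1 - b * q ^ (k - 2)) * G (k - 3))
    (hGm1 : G (-1) = 1 - b) (hG0 : G 0 = 1)
    (hG1 : G 1 = b * q / (1 - b * q) + (1 + a * q) * (1 + d * q) / (1 - c * q))
    (H : ℤ → ℂ)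
    (hHrec : ∀ k : ℤ, 0 ≤ k →
      (1 - c * q ^ k) * (1 - b * q ^ (k + 1)) * H k =
        (1 - b * c * q ^ (2 * k)) * H (k - 1) +
        (a * q ^ k + d * q ^ k + a * d * q ^ (2 * k)) * H (k - 2) +
        a * d * q ^ (2 * k - 1) * H (k - 3))
    (hHm1 : H (-1) = 1) (hHm2 : H (-2) = 0) (hHm3 : H (-3) = (b - 1) * c * q / (a * d)) :
    ∀ k : ℕ, G k / (1 - b * q ^ (k + 1)) = H k := by
  have hH : ∀ k, 0 ≤ k → PrimcHRecurrenceAt q a b c d H k := hHrec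
  have hbz : ∀ k : ℤ, 0 ≤ k → 1 - b * q ^ k ≠ 0 := fun k hk => one_sub_mul_zpow_ne_zero hb hk
  have hH₀ : primcRescale q b H 0 = 1 :=
    (hH 0 le_rfl).primcRescale_zero hq ha hd (by simpa using hc 0) hHm1 hHm2 hHm3
  have hH₁ : primcRescale q b H 1 = G 1 := by
    rw [hG1]
    exact (hH 1 zero_le_one).primcRescale_one (by simpa using hb 1) (by simpa using hc 1) hH₀
      hHm1 hHm2
  have hGH : ∀ k : ℤ, -1 ≤ k → G k = primcRescale q b H k :=
    eq_of_third_order_recurrence (R := primcGStep q a b c d)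
      (fun k hk => one_sub_mul_zpow_ne_zero hc (by omega)) hGrec
      (fun k hk => (hH k (by omega)).mul_primcRescale (hbz k (by omega)) (hbz _ (by omega))
        (hbz _ (by omega)))
      (by norm_num [hH₁]) (by norm_num [hG0, hH₀]) (by norm_num [primcRescale, hGm1, hHm1])
  intro k
  rw [hGH k (by omega), primcRescale, div_eq_iff (hb (k + 1))]
  norm_cast
  ring
end

section
/- Define u_n by u_0 = 1, u_1 = q(b-1)/((1-bq)(1-q)), and for n ≥ 2: u_n = ((1+aq^{n-1})(1+dq^{n-1}))/((1-bq^n)(1-cq^{n-1})) · u_{n-2} + (-1)^n q^n (1-b)/((1-bq^n)(q;q)_n). Then for all n ≥ 0: u_{2n} = (1-b) ∑_{ℓ=0}^{n} [(-aq^{2ℓ+1};q²)_{n-ℓ} (-dq^{2ℓ+1};q²)_{n-ℓ}]/[(bq^{2ℓ};q²)_{n-ℓ+1} (cq^{2ℓ+1};q²)_{n-ℓ}] · q^{2ℓ}/(q;q)_{2ℓ}, and u_{2n+1} = (b-1) ∑_{ℓ=0}^{n} [(-aq^{2ℓ+2};q²)_{n-ℓ} (-dq^{2ℓ+2};q²)_{n-ℓ}]/[(bq^{2ℓ+1};q²)_{n-ℓ+1}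 (cq^{2ℓ+2};q²)_{n-ℓ}] · q^{2ℓ+1}/(q;q)_{2ℓ+1}. -/
noncomputable section

/-!
Write `N = 2n + e` with `e ∈ {0, 1}`. Along each parity class the recurrence is a first-order
linear recurrence `u_{N+2} = R_N u_N + κ s_{N+2}` (with `κ = ±(1 - b)`), whose solution is
`κ ∑_{m ≤ n} R_{2n+e-2} ⋯ R_{2m+e} s_{2m+e}`. The products of the ratios `R` telescope into the
quotients of `q²`-Pochhammer symbols of the explicit formula, because each extra factor of those
symbols is exactly one `R`.
-/

open Finset

lemma qPoch_zero (x q : ℂ) : qPoch x q 0 = 1 := prod_range_zero _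

lemma qPoch_succ (x q : ℂ) (n : ℕ) :
    qPoch x q (n + 1) = qPoch x q n * (1 - x * q ^ n) := prod_range_succ _ _

section

variable (q a b c d : ℂ)

/-- `R_N`, the coefficient of `u_N` in the recurrence for `u_{N+2}`. -/
def uCoeff (N : ℕ) : ℂ :=
  (1 + a * q ^ (N + 1)) * (1 + d * q ^ (N + 1)) / ((1 - b * q ^ (N + 2)) * (1 - c * q ^ (N + 1)))

/-- The inhomogeneous term of the recurrence for `u_N`, up to the factor `(-1)^N (1 - b)`. -/
def uInhom (N : ℕ) : ℂ := q ^ N / ((1 - b * q ^ N) * qPoch q q N)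

/-- The `m`-th summand of the explicit formula for `u_{2n+e}`, with `j = 2m + e`, `k = n - m`. -/
def uSummand (j k : ℕ) : ℂ :=
  qPoch (-(a * q ^ (j + 1))) (q ^ 2) k * qPoch (-(d * q ^ (j + 1))) (q ^ 2) k /
      (qPoch (b * q ^ j) (q ^ 2) (k + 1) * qPoch (c * q ^ (j + 1)) (q ^ 2) k) *
    (q ^ j / qPoch q q j)

def uSum (e n : ℕ) : ℂ := ∑ m ∈ range (n + 1), uSummand q a b c d (2 * m + e) (n - m)

lemma uSummand_zero (j : ℕ) : uSummand q a b c d j 0 = uInhom q b j := by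
  simp only [uSummand, uInhom, qPoch_succ, qPoch_zero, pow_zero, mul_one, div_eq_mul_inv, mul_inv]
  ring

lemma uSummand_succ (j k : ℕ) :
    uSummand q a b c d j (k + 1) = uCoeff q a b c d (j + 2 * k) * uSummand q a b c d j k := by
  have hpow : ∀ x : ℂ, x * q ^ (j + 1) * (q ^ 2) ^ k = x * q ^ (j + 2 * k + 1) := fun x => by
    ring
  have hpow' : b * q ^ j * (q ^ 2) ^ (k + 1) = b * q ^ (j + 2 * k + 2) := by ring
  simp only [uSummand, uCoeff, qPoch_succ _ _ k, qPoch_succ _ _ (k + 1), neg_mul, hpow, hpow',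
    div_eq_mul_inv, mul_inv]
  ring

lemma uSum_zero (e : ℕ) : uSum q a b c d e 0 = uInhom q b e := by
  simp [uSum, uSummand_zero]

lemma uSum_succ (e n : ℕ) :
    uSum q a b c d e (n + 1) =
      uCoeff q a b c d (2 * n + e) * uSum q a b c d e n + uInhom q b (2 * n + e + 2) := by
  rw [uSum, sum_range_succ, Nat.sub_self, uSummand_zero, uSum, mul_sum]
  congr 1
  · refine sum_congr rfl fun m hm => ?_
    have hmn : m ≤ n := Nat.lt_succ_iff.mp (mem_range.mp hm)
    rw [Nat.sub_add_comm hmn, uSummand_succ]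
    congr 2
    omega
  · congr 1
    ring

lemma u_add_two {u : ℕ → ℂ}
    (hrec : ∀ n : ℕ, 2 ≤ n →
      u n = (1 + a * q ^ (n - 1)) * (1 + d * q ^ (n - 1)) /
          ((1 - b * q ^ n) * (1 - c * q ^ (n - 1))) * u (n - 2)
        + (-1) ^ n * q ^ n * (1 - b) / ((1 - b * q ^ n) * qPoch q q n))
    (N : ℕ) :
    u (N + 2) = uCoeff q a b c d N * u N + (-1) ^ N * (1 - b) * uInhom q b (N + 2) := by
  rw [hrec (N + 2) le_add_self, Nat.add_sub_cancel, show N + 2 - 1 = N + 1 by omega, uCoeff,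
    uInhom]
  ring

lemma eq_mul_uSum_of_recurrence {u : ℕ → ℂ} {e : ℕ} {κ : ℂ} (hinit : u e = κ * uInhom q b e)
    (hrec : ∀ n : ℕ, u (2 * n + e + 2) =
      uCoeff q a b c d (2 * n + e) * u (2 * n + e) + κ * uInhom q b (2 * n + e + 2))
    (n : ℕ) : u (2 * n + e) = κ * uSum q a b c d e n := by
  induction n with
  | zero => rw [uSum_zero, mul_zero, zero_add, hinit]
  | succ n ih =>
    rw [show 2 * (n + 1) + e = 2 * n + e + 2 by ring, hrec, ih, uSum_succ]
    ring

end

theorem u_explicit_formula_general (q a b c d : ℂ)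
    (hb : ∀ n : ℕ, 1 - b * q ^ n ≠ 0)
    (u : ℕ → ℂ) (h0 : u 0 = 1) (h1 : u 1 = q * (b - 1) / ((1 - b * q) * (1 - q)))
    (hrec : ∀ n : ℕ, 2 ≤ n →
      u n = (1 + a * q ^ (n - 1)) * (1 + d * q ^ (n - 1)) /
          ((1 - b * q ^ n) * (1 - c * q ^ (n - 1))) * u (n - 2)
        + (-1) ^ n * q ^ n * (1 - b) / ((1 - b * q ^ n) * qPoch q q n)) :
    (∀ n : ℕ, u (2 * n) = (1 - b) * ∑ m ∈ Finset.range (n + 1),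
        qPoch (-(a * q ^ (2 * m + 1))) (q ^ 2) (n - m) *
          qPoch (-(d * q ^ (2 * m + 1))) (q ^ 2) (n - m) /
        (qPoch (b * q ^ (2 * m)) (q ^ 2) (n - m + 1) *
          qPoch (c * q ^ (2 * m + 1)) (q ^ 2) (n - m)) *
        (q ^ (2 * m) / qPoch q q (2 * m))) ∧
    (∀ n : ℕ, u (2 * n + 1) = (b - 1) * ∑ m ∈ Finset.range (n + 1),
        qPoch (-(a * q ^ (2 * m + 2))) (q ^ 2) (n - m) *
          qPoch (-(d * q ^ (2 * m + 2))) (q ^ 2) (n - m) /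
        (qPoch (b * q ^ (2 * m + 1)) (q ^ 2) (n - m + 1) *
          qPoch (c * q ^ (2 * m + 2)) (q ^ 2) (n - m)) *
        (q ^ (2 * m + 1) / qPoch q q (2 * m + 1))) := by
  have hstep := u_add_two q a b c d hrec
  refine ⟨fun n => ?_, fun n => ?_⟩
  · refine eq_mul_uSum_of_recurrence q a b c d (e := 0) ?_ (fun n => ?_) n
    · have hb0 : 1 - b ≠ 0 := by simpa using hb 0
      rw [h0, uInhom, qPoch_zero]
      field_simp
    · simpa [pow_mul] using hstep (2 * n)
  · refine eq_mul_uSum_of_recurrence q a b c d (e := 1) ?_ (fun n => ?_) n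
    · rw [h1, uInhom, qPoch_succ, qPoch_zero]
      ring
    · rw [hstep, pow_succ, pow_mul, neg_one_sq, one_pow]
      ring

/-- Explicit solution of the recurrence \eqref{eq:u}: if `u_0 = 1`,
`u_1 = q(b-1)/((1-bq)(1-q))` and for `n ≥ 2`,
`u_n = ((1+aq^{n-1})(1+dq^{n-1}))/((1-bq^n)(1-cq^{n-1})) u_{n-2}
  + (-1)^n q^n (1-b)/((1-bq^n)(q;q)_n)`, then `u_{2n}` and `u_{2n+1}` are given by the
stated explicit sums. -/
theorem u_explicit_formula (q a b c d : ℂ)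
    (hb : ∀ n : ℕ, 1 - b * q ^ n ≠ 0) (hc : ∀ n : ℕ, 1 - c * q ^ (n + 1) ≠ 0)
    (hq : ∀ n : ℕ, 1 - q ^ (n + 1) ≠ 0)
    (u : ℕ → ℂ) (h0 : u 0 = 1) (h1 : u 1 = q * (b - 1) / ((1 - b * q) * (1 - q)))
    (hrec : ∀ n : ℕ, 2 ≤ n →
      u n = (1 + a * q ^ (n - 1)) * (1 + d * q ^ (n - 1)) /
          ((1 - b * q ^ n) * (1 - c * q ^ (n - 1))) * u (n - 2)
        + (-1) ^ n * q ^ n * (1 - b) / ((1 - b * q ^ n) * qPoch q q n)) :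
    (∀ n : ℕ, u (2 * n) = (1 - b) * ∑ m ∈ Finset.range (n + 1),
        qPoch (-(a * q ^ (2 * m + 1))) (q ^ 2) (n - m) *
          qPoch (-(d * q ^ (2 * m + 1))) (q ^ 2) (n - m) /
        (qPoch (b * q ^ (2 * m)) (q ^ 2) (n - m + 1) *
          qPoch (c * q ^ (2 * m + 1)) (q ^ 2) (n - m)) *
        (q ^ (2 * m) / qPoch q q (2 * m))) ∧
    (∀ n : ℕ, u (2 * n + 1) = (b - 1) * ∑ m ∈ Finset.range (n + 1),
        qPoch (-(a * q ^ (2 * m + 2))) (q ^ 2) (n - m) *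
          qPoch (-(d * q ^ (2 * m + 2))) (q ^ 2) (n - m) /
        (qPoch (b * q ^ (2 * m + 1)) (q ^ 2) (n - m + 1) *
          qPoch (c * q ^ (2 * m + 2)) (q ^ 2) (n - m)) *
        (q ^ (2 * m + 1) / qPoch q q (2 * m + 1))) :=
  u_explicit_formula_general q a b c d hb u h0 h1 hrec
end
end
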